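/- arXiv:2203.16436 — 2 statements merged into one kernel-verified Lean document; each statement's English description precedes it below -/
import Mathlib

section
/- Let A be the n×n Hermitian matrix with diagonal entries d₁,…,d_{n−1}, 𝐚, last column (above the diagonal) a₁,…,a_{n−1}, and zeros elsewhere off-diagonal except the last row/column. Fix ε > 0. If 𝐚 ≥ (2n−3)/ε · ∑_{i<n}|aᵢ|² + (n−1)∑_{i<n}|dᵢ| + (n−2)ε/(2n−3), then the eigenvalues λ₁,…,λₙ of A (suitably ordered) satisfy |d_α − λ_α| < ε for 1 ≤ α ≤ n−1 and 0 ≤ λₙ − 𝐚 < (n−1)ε. -/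
open Matrix Finset Submodule

section Aux

variable {ι : Type*} [Fintype ι]

/-- view a plain function as an element of Euclidean space -/
noncomputable def stmt8toE {ι : Type*} (v : ι → ℝ) : EuclideanSpace ℝ ι :=
  (WithLp.equiv 2 (ι → ℝ)).symm v

lemma stmt8_inner_toE (x : EuclideanSpace ℝ ι) (v : ι → ℝ) :
    (inner ℝ x (stmt8toE v) : ℝ) = (WithLp.equiv 2 (ι → ℝ)) x ⬝ᵥ v := by
  simp [PiLp.inner_apply, stmt8toE, dotProduct, mul_comm]

lemma stmt8_inner_toE' (x : EuclideanSpace ℝ ι) (v : ι → ℝ) :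
    (inner ℝ (stmt8toE v) x : ℝ) = (WithLp.equiv 2 (ι → ℝ)) x ⬝ᵥ v := by
  rw [real_inner_comm]; exact stmt8_inner_toE x v

lemma stmt8_parseval (v : ι → ℝ) (b : OrthonormalBasis ι ℝ (EuclideanSpace ℝ ι)) :
    ∑ j, (inner ℝ (b j) (stmt8toE v) : ℝ) ^ 2 = ∑ i, v i ^ 2 := by
  have h1 := b.sum_inner_mul_inner (stmt8toE v) (stmt8toE v)
  have h2 : (inner ℝ (stmt8toE v) (stmt8toE v) : ℝ) = ∑ i, v i ^ 2 := by
    rw [stmt8_inner_toE]; simp [stmt8toE, dotProduct, sq]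
  rw [← h2, ← h1]
  refine Finset.sum_congr rfl fun i _ => ?_
  rw [real_inner_comm (stmt8toE v) (b i), sq]

lemma stmt8_finrank_span_onb_image (B : OrthonormalBasis ι ℝ (EuclideanSpace ℝ ι))
    (T : Finset ι) :
    Module.finrank ℝ (span ℝ (⇑B '' ↑T)) = T.card := by
  have hli : LinearIndependent ℝ (⇑B ∘ (Subtype.val : {x // x ∈ T} → ι)) :=
    (B.orthonormal.linearIndependent).comp _ Subtype.val_injective
  have : ⇑B '' ↑T = Set.range (⇑B ∘ (Subtype.val : {x // x ∈ T} → ι)) := by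
    rw [Set.range_comp, Subtype.range_coe_subtype]
    simp
  rw [this, finrank_span_eq_card hli, Fintype.card_coe]

lemma stmt8_exists_ne_zero_mem_inf (W V : Submodule ℝ (EuclideanSpace ℝ ι))
    (h : Module.finrank ℝ (EuclideanSpace ℝ ι)
      < Module.finrank ℝ W + Module.finrank ℝ V) :
    ∃ v, v ∈ W ⊓ V ∧ v ≠ 0 := by
  have h1 := Submodule.finrank_sup_add_finrank_inf_eq W V
  have h2 : Module.finrank ℝ ↥(W ⊔ V) ≤ Module.finrank ℝ (EuclideanSpace ℝ ι) :=
    Submodule.finrank_le _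
  have h3 : 0 < Module.finrank ℝ ↥(W ⊓ V) := by omega
  obtain ⟨⟨v, hv⟩, hvne⟩ := Module.finrank_pos_iff_exists_ne_zero.mp h3
  exact ⟨v, hv, fun h0 => hvne (Subtype.ext h0)⟩

lemma stmt8_inner_eq_zero_of_mem_span (B : OrthonormalBasis ι ℝ (EuclideanSpace ℝ ι))
    (T : Finset ι) {j : ι} (hj : j ∉ T) {x : EuclideanSpace ℝ ι}
    (hx : x ∈ span ℝ (⇑B '' ↑T)) : (inner ℝ (B j) x : ℝ) = 0 := by
  induction hx using Submodule.span_induction with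
  | mem y hy =>
      obtain ⟨k, hk, rfl⟩ := hy
      exact B.orthonormal.2 (fun h : j = k => hj (h ▸ hk))
  | zero => exact inner_zero_right _
  | add y z _ _ hy hz => rw [inner_add_right, hy, hz, add_zero]
  | smul c y _ hy => rw [real_inner_smul_right, hy, mul_zero]

variable [DecidableEq ι]

lemma stmt8_mem_span_single_support (S : Finset ι) {x : EuclideanSpace ℝ ι}
    (hx : x ∈ span ℝ (⇑(EuclideanSpace.basisFun ι ℝ) '' ↑S)) :
    ∀ y ∉ S, x y = 0 := by
  induction hx using Submodule.span_induction with
  | mem z hz =>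
      obtain ⟨k, hk, rfl⟩ := hz
      intro y hy
      have hyk : y ≠ k := fun h => hy (h ▸ hk)
      simp [EuclideanSpace.basisFun_apply, EuclideanSpace.single_apply, hyk]
  | zero => intro y _; rfl
  | add y z _ _ hy hz => intro w hw; have := hy w hw; have := hz w hw
                         simp [PiLp.add_apply, *]
  | smul c y _ hy => intro w hw; have := hy w hw; simp [PiLp.smul_apply, *]



lemma stmt8_quad_expand (A : Matrix ι ι ℝ) (hA : A.IsHermitian) (v : ι → ℝ) :
    v ⬝ᵥ (A *ᵥ v) =
      ∑ j, hA.eigenvalues j * (inner ℝ (hA.eigenvectorBasis j) (stmt8toE v) : ℝ) ^ 2 := by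
  set B := hA.eigenvectorBasis with hB
  have key : ∀ j, (inner ℝ (B j) (stmt8toE (A *ᵥ v)) : ℝ)
      = hA.eigenvalues j * (inner ℝ (B j) (stmt8toE v) : ℝ) := by
    intro j
    rw [stmt8_inner_toE, stmt8_inner_toE, dotProduct_mulVec, ← mulVec_transpose]
    have ht : A.transpose = A := by
      have := hA.eq
      rwa [conjTranspose_eq_transpose_of_trivial] at this
    change A.transpose *ᵥ ⇑(B j) ⬝ᵥ v = hA.eigenvalues j * ⇑(B j) ⬝ᵥ v
    rw [ht, hA.mulVec_eigenvectorBasis, smul_dotProduct, smul_eq_mul]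
  have h0 : v ⬝ᵥ (A *ᵥ v) = (inner ℝ (stmt8toE v) (stmt8toE (A *ᵥ v)) : ℝ) := by
    rw [stmt8_inner_toE', stmt8toE, Equiv.apply_symm_apply, dotProduct_comm]
  rw [h0, ← B.sum_inner_mul_inner (stmt8toE v) (stmt8toE (A *ᵥ v))]
  refine Finset.sum_congr rfl fun j _ => ?_
  rw [key j, real_inner_comm (stmt8toE v) (B j), sq]
  ring

lemma stmt8_rayleigh_ge (A : Matrix ι ι ℝ) (hA : A.IsHermitian) (T : Finset ι) (r : ℝ)
    (hr : ∀ j ∈ T, r ≤ hA.eigenvalues j) (v : ι → ℝ)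
    (hv : stmt8toE v ∈ span ℝ (⇑hA.eigenvectorBasis '' ↑T)) :
    r * ∑ i, v i ^ 2 ≤ v ⬝ᵥ (A *ᵥ v) := by
  have hq := stmt8_quad_expand A hA v
  set c : ι → ℝ := fun j => (inner ℝ (hA.eigenvectorBasis j) (stmt8toE v) : ℝ) with hc
  have hz : ∀ j ∉ T, c j = 0 := fun j hj =>
    stmt8_inner_eq_zero_of_mem_span hA.eigenvectorBasis T hj hv
  have h1 : ∑ j, hA.eigenvalues j * c j ^ 2 = ∑ j ∈ T, hA.eigenvalues j * c j ^ 2 :=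
    (Finset.sum_subset (Finset.subset_univ T) (fun j _ hj => by rw [hz j hj]; ring)).symm
  have h2 : ∑ j, c j ^ 2 = ∑ j ∈ T, c j ^ 2 :=
    (Finset.sum_subset (Finset.subset_univ T) (fun j _ hj => by rw [hz j hj]; ring)).symm
  have h3 : ∑ i, v i ^ 2 = ∑ j, c j ^ 2 := (stmt8_parseval v hA.eigenvectorBasis).symm
  rw [hq, h1, h3, h2, Finset.mul_sum]
  exact Finset.sum_le_sum fun j hj => mul_le_mul_of_nonneg_right (hr j hj) (sq_nonneg _)

lemma stmt8_rayleigh_le (A : Matrix ι ι ℝ) (hA : A.IsHermitian) (T : Finset ι) (r : ℝ)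
    (hr : ∀ j ∈ T, hA.eigenvalues j ≤ r) (v : ι → ℝ)
    (hv : stmt8toE v ∈ span ℝ (⇑hA.eigenvectorBasis '' ↑T)) :
    v ⬝ᵥ (A *ᵥ v) ≤ r * ∑ i, v i ^ 2 := by
  have hq := stmt8_quad_expand A hA v
  set c : ι → ℝ := fun j => (inner ℝ (hA.eigenvectorBasis j) (stmt8toE v) : ℝ) with hc
  have hz : ∀ j ∉ T, c j = 0 := fun j hj =>
    stmt8_inner_eq_zero_of_mem_span hA.eigenvectorBasis T hj hv
  have h1 : ∑ j, hA.eigenvalues j * c j ^ 2 = ∑ j ∈ T, hA.eigenvalues j * c j ^ 2 :=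
    (Finset.sum_subset (Finset.subset_univ T) (fun j _ hj => by rw [hz j hj]; ring)).symm
  have h2 : ∑ j, c j ^ 2 = ∑ j ∈ T, c j ^ 2 :=
    (Finset.sum_subset (Finset.subset_univ T) (fun j _ hj => by rw [hz j hj]; ring)).symm
  have h3 : ∑ i, v i ^ 2 = ∑ j, c j ^ 2 := (stmt8_parseval v hA.eigenvectorBasis).symm
  rw [hq, h1, h3, h2, Finset.mul_sum]
  exact Finset.sum_le_sum fun j hj => mul_le_mul_of_nonneg_right (hr j hj) (sq_nonneg _)

lemma stmt8_sum_eig (A : Matrix ι ι ℝ) (hA : A.IsHermitian) :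
    ∑ j, hA.eigenvalues j = A.trace := by
  set U : Matrix ι ι ℝ := (hA.eigenvectorUnitary : Matrix ι ι ℝ) with hU
  have hsp := hA.spectral_theorem
  have hUU : star U * U = 1 := Unitary.coe_star_mul_self hA.eigenvectorUnitary
  calc ∑ j, hA.eigenvalues j
      = (diagonal (RCLike.ofReal ∘ hA.eigenvalues) : Matrix ι ι ℝ).trace := by
        rw [trace_diagonal]; rfl
    _ = A.trace := by
        conv_rhs => rw [hsp]
        rw [Unitary.conjStarAlgAut_apply, trace_mul_cycle, ← hU, hUU, one_mul]

lemma stmt8_sum_eig_sq (A : Matrix ι ι ℝ) (hA : A.IsHermitian) :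
    ∑ j, hA.eigenvalues j ^ 2 = (A * A).trace := by
  set U : Matrix ι ι ℝ := (hA.eigenvectorUnitary : Matrix ι ι ℝ) with hU
  set D : Matrix ι ι ℝ := diagonal (RCLike.ofReal ∘ hA.eigenvalues) with hD
  have hsp : A = U * D * star U := hA.spectral_theorem
  have hUU : star U * U = 1 := Unitary.coe_star_mul_self hA.eigenvectorUnitary
  have key : A * A = U * (D * D) * star U := by
    rw [hsp]
    calc U * D * star U * (U * D * star U) = U * D * (star U * U) * D * star U := by
          noncomm_ring
      _ = U * (D * D) * star U := by rw [hUU]; noncomm_ring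
  rw [key, trace_mul_cycle, ← mul_assoc, hUU, one_mul, hD, diagonal_mul_diagonal,
    trace_diagonal]
  exact Finset.sum_congr rfl fun i _ => by simp [sq]

end Aux


set_option maxHeartbeats 1000000 in
/-- Eigenvalue localization lemma (Lemma 2.2 / `yuan's-quantitative-lemma`): for the
`(m+1)×(m+1)` symmetric matrix `A` with diagonal `d₁,…,d_m, 𝐚`, last column `a₁,…,a_m`, and
zeros elsewhere off-diagonal (here `n = m+1`, so `2n−3 = 2m−1`, `n−1 = m`, `n−2 = m−1`):
if `𝐚 ≥ (2m−1)/ε ∑|aᵢ|² + m ∑|dᵢ| + (m−1)ε/(2m−1)`, then, after a suitable permutation,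
the eigenvalues `λ` of `A` satisfy `|d_α − λ_α| < ε` and `0 ≤ λ_last − 𝐚 < m·ε`. -/
theorem stmt8 {m : ℕ} (hm : 1 ≤ m) (ε : ℝ) (hε : 0 < ε)
    (d a : Fin m → ℝ) (a0 : ℝ)
    (A : Matrix (Option (Fin m)) (Option (Fin m)) ℝ)
    (hdiag : ∀ i : Fin m, A (some i) (some i) = d i)
    (hoff : ∀ i j : Fin m, i ≠ j → A (some i) (some j) = 0)
    (hcol : ∀ i : Fin m, A (some i) none = a i)
    (hrow : ∀ i : Fin m, A none (some i) = a i)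
    (hcorner : A none none = a0)
    (hA : A.IsHermitian)
    (hgrowth : a0 ≥ (2 * (m : ℝ) - 1) / ε * ∑ i, |a i| ^ 2
        + (m : ℝ) * ∑ i, |d i| + ((m : ℝ) - 1) * ε / (2 * (m : ℝ) - 1)) :
    ∃ σ : Equiv.Perm (Option (Fin m)),
      (∀ i : Fin m, |d i - hA.eigenvalues (σ (some i))| < ε) ∧
      0 ≤ hA.eigenvalues (σ none) - a0 ∧
      hA.eigenvalues (σ none) - a0 < (m : ℝ) * ε := by
  classical
  obtain ⟨π, μ, hμmono, hμ⟩ : ∃ (π : Equiv.Perm (Fin m)) (μ : Fin m → ℝ),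
      Monotone μ ∧ ∀ j, μ j = d (π j) :=
    ⟨Tuple.sort d, d ∘ Tuple.sort d, Tuple.monotone_sort d, fun _ => rfl⟩
  obtain ⟨ρ, ν, hνmono, hν⟩ : ∃ (ρ : Fin (m+1) ≃ Option (Fin m)) (ν : Fin (m+1) → ℝ),
      Monotone ν ∧ ∀ j, ν j = hA.eigenvalues (ρ j) :=
    ⟨(Tuple.sort (hA.eigenvalues ∘ finSuccEquivLast)).trans finSuccEquivLast,
     (hA.eigenvalues ∘ finSuccEquivLast) ∘ ⇑(Tuple.sort (hA.eigenvalues ∘ finSuccEquivLast)),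
     Tuple.monotone_sort _, fun _ => rfl⟩
  -- interlacing: the k-th smallest eigenvalue is at most the k-th smallest dᵢ
  have interlace : ∀ k : Fin m, ν (Fin.castSucc k) ≤ μ k := by
    intro k
    set S : Finset (Option (Fin m)) := (Finset.Iic k).image (fun j => some (π j)) with hS
    set T : Finset (Option (Fin m)) := (Finset.Ici (Fin.castSucc k)).image ⇑ρ with hT
    have hScard : S.card = (k : ℕ) + 1 := by
      have hinj : Function.Injective (fun j : Fin m => some (π j)) :=
        fun x y h => π.injective (Option.some_injective _ h)
      rw [hS, Finset.card_image_of_injective _ hinj, Fin.card_Iic]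
    have hTcard : T.card = m + 1 - (k : ℕ) := by
      rw [hT, Finset.card_image_of_injective _ ρ.injective, Fin.card_Ici]
      simp
    set W := span ℝ (⇑(EuclideanSpace.basisFun (Option (Fin m)) ℝ) '' ↑S) with hW
    set V := span ℝ (⇑hA.eigenvectorBasis '' ↑T) with hV
    have hdim : Module.finrank ℝ (EuclideanSpace ℝ (Option (Fin m)))
        < Module.finrank ℝ W + Module.finrank ℝ V := by
      rw [hW, hV, stmt8_finrank_span_onb_image, stmt8_finrank_span_onb_image,
        finrank_euclideanSpace, hScard, hTcard]
      simp only [Fintype.card_option, Fintype.card_fin]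
      have := k.isLt
      omega
    obtain ⟨x, hx, hxne⟩ := stmt8_exists_ne_zero_mem_inf W V hdim
    obtain ⟨hxW, hxV⟩ := hx
    set v : Option (Fin m) → ℝ := (WithLp.equiv 2 _) x with hv
    have hxv : stmt8toE v = x := (WithLp.equiv 2 _).symm_apply_apply x
    have hsupp : ∀ y ∉ S, v y = 0 := fun y hy =>
      stmt8_mem_span_single_support S hxW y hy
    have hvnone : v none = 0 := by
      refine hsupp none ?_
      rw [hS]
      simp
    have hQ : v ⬝ᵥ (A *ᵥ v) = ∑ i : Fin m, d i * v (some i) ^ 2 := by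
      have hd : v ⬝ᵥ (A *ᵥ v) = ∑ y, v y * ∑ z, A y z * v z := by
        simp [dotProduct, mulVec]
      rw [hd, Fintype.sum_option, hvnone, zero_mul, zero_add]
      refine Finset.sum_congr rfl fun i _ => ?_
      rw [Fintype.sum_option, hvnone, mul_zero, zero_add]
      have h1 : ∑ j : Fin m, A (some i) (some j) * v (some j) = d i * v (some i) := by
        rw [Finset.sum_eq_single i]
        · rw [hdiag]
        · intro j _ hji
          rw [hoff i j (Ne.symm hji), zero_mul]
        · intro h; exact absurd (Finset.mem_univ i) h
      rw [h1]
      ring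
    have hsum : ∑ y, v y ^ 2 = ∑ i : Fin m, v (some i) ^ 2 := by
      rw [Fintype.sum_option, hvnone]
      simp
    have hQle : v ⬝ᵥ (A *ᵥ v) ≤ μ k * ∑ y, v y ^ 2 := by
      rw [hQ, hsum, Finset.mul_sum]
      refine Finset.sum_le_sum fun i _ => ?_
      by_cases hiS : some i ∈ S
      · obtain ⟨j, hj, hji⟩ := Finset.mem_image.mp hiS
        have hπ : π j = i := Option.some_injective _ hji
        have hdle : d i ≤ μ k := by
          rw [← hπ, ← hμ j]
          exact hμmono (Finset.mem_Iic.mp hj)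
        exact mul_le_mul_of_nonneg_right hdle (sq_nonneg _)
      · rw [hsupp _ hiS]
        simp
    have hQge : ν (Fin.castSucc k) * ∑ y, v y ^ 2 ≤ v ⬝ᵥ (A *ᵥ v) := by
      refine stmt8_rayleigh_ge A hA T _ ?_ v (hxv ▸ hxV)
      intro y hy
      obtain ⟨l, hl, rfl⟩ := Finset.mem_image.mp hy
      rw [← hν l]
      exact hνmono (Finset.mem_Ici.mp hl)
    have hpos : 0 < ∑ y, v y ^ 2 := by
      have hvne : ∃ y, v y ≠ 0 := by
        by_contra hall
        push_neg at hall
        exact hxne (by rw [← hxv]; exact congrArg (WithLp.equiv 2 _).symm (funext fun y => hall y))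
      obtain ⟨y, hy⟩ := hvne
      refine Finset.sum_pos' (fun i _ => sq_nonneg _) ⟨y, Finset.mem_univ y, ?_⟩
      exact lt_of_le_of_ne (sq_nonneg _) (Ne.symm (pow_ne_zero 2 hy))
    exact le_of_mul_le_mul_right (hQge.trans hQle) hpos
  -- the largest eigenvalue is at least a0
  have htop : a0 ≤ ν (Fin.last m) := by
    set v : Option (Fin m) → ℝ := Pi.single none 1 with hv
    have hQ : v ⬝ᵥ (A *ᵥ v) = a0 := by
      have hd : v ⬝ᵥ (A *ᵥ v) = ∑ y, v y * ∑ z, A y z * v z := by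
        simp [dotProduct, mulVec]
      have h1 : ∀ y, ∑ z, A y z * v z = A y none := by
        intro y
        rw [Fintype.sum_option]
        simp [hv, Pi.single_apply]
      rw [hd]
      simp only [h1]
      rw [Fintype.sum_option]
      simp [hv, Pi.single_apply, hcorner]
    have hsum : ∑ y, v y ^ 2 = 1 := by
      rw [Fintype.sum_option]
      simp [hv, Pi.single_apply]
    have hmem : stmt8toE v ∈
        span ℝ (⇑hA.eigenvectorBasis '' ↑(Finset.univ : Finset (Option (Fin m)))) := by
      have h2 : (⇑hA.eigenvectorBasis '' ↑(Finset.univ : Finset (Option (Fin m))))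
          = Set.range ⇑hA.eigenvectorBasis := by
        rw [Finset.coe_univ, Set.image_univ]
      rw [h2]
      have hsp : span ℝ (Set.range ⇑hA.eigenvectorBasis) = ⊤ := by
        rw [← OrthonormalBasis.coe_toBasis]
        exact Module.Basis.span_eq _
      rw [hsp]
      trivial
    have hb : ∀ j ∈ (Finset.univ : Finset (Option (Fin m))),
        hA.eigenvalues j ≤ ν (Fin.last m) := by
      intro j _
      have h3 : hA.eigenvalues j = ν (ρ.symm j) := by rw [hν, ρ.apply_symm_apply]
      rw [h3]
      exact hνmono (Fin.le_last _)
    have := stmt8_rayleigh_le A hA Finset.univ _ hb v hmem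
    rw [hQ, hsum, mul_one] at this
    exact this
  -- trace identities
  have htr1 : ∑ j : Fin (m+1), ν j = (∑ i, d i) + a0 := by
    have h1 : ∑ j : Fin (m+1), ν j = ∑ y, hA.eigenvalues y := by
      rw [Finset.sum_congr rfl fun j (_ : j ∈ Finset.univ) => hν j]
      exact Equiv.sum_comp ρ hA.eigenvalues
    rw [h1, stmt8_sum_eig A hA, Matrix.trace]
    rw [Fintype.sum_option]
    simp only [Matrix.diag_apply, hcorner, hdiag]
    ring
  have htr2 : ∑ j : Fin (m+1), ν j ^ 2 = (∑ i, d i ^ 2) + a0 ^ 2 + 2 * ∑ i, a i ^ 2 := by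
    have h1 : ∑ j : Fin (m+1), ν j ^ 2 = ∑ y, hA.eigenvalues y ^ 2 := by
      rw [Finset.sum_congr rfl fun j (_ : j ∈ Finset.univ) => by rw [hν j]]
      exact Equiv.sum_comp ρ (fun y => hA.eigenvalues y ^ 2)
    rw [h1, stmt8_sum_eig_sq A hA]
    have h2 : (A * A).trace = ∑ y, ∑ z, A y z * A z y := by
      simp [Matrix.trace, Matrix.diag, Matrix.mul_apply]
    rw [h2, Fintype.sum_option]
    have hnone : ∑ z, A none z * A z none = a0 ^ 2 + ∑ i, a i ^ 2 := by
      rw [Fintype.sum_option, hcorner]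
      have h3 : ∀ i : Fin m, A none (some i) * A (some i) none = a i ^ 2 := fun i => by
        rw [hrow, hcol, sq]
      rw [Finset.sum_congr rfl fun i _ => h3 i, sq]
    have hsome : ∀ i : Fin m, ∑ z, A (some i) z * A z (some i) = a i ^ 2 + d i ^ 2 := by
      intro i
      rw [Fintype.sum_option, hcol, hrow]
      have h4 : ∑ j : Fin m, A (some i) (some j) * A (some j) (some i) = d i ^ 2 := by
        rw [Finset.sum_eq_single i]
        · rw [hdiag, sq]
        · intro j _ hji
          rw [hoff i j (Ne.symm hji), zero_mul]
        · intro h; exact absurd (Finset.mem_univ i) h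
      rw [h4]
      ring
    rw [hnone, Finset.sum_congr rfl fun i _ => hsome i, Finset.sum_add_distrib]
    ring
  have hμsum : ∑ j : Fin m, μ j = ∑ i, d i := by
    rw [Finset.sum_congr rfl fun j (_ : j ∈ Finset.univ) => hμ j]
    exact Equiv.sum_comp π d
  have hμsqsum : ∑ j : Fin m, μ j ^ 2 = ∑ i, d i ^ 2 := by
    rw [Finset.sum_congr rfl fun j (_ : j ∈ Finset.univ) => by rw [hμ j]]
    exact Equiv.sum_comp π (fun i => d i ^ 2)
  -- arithmetic endgame
  have hsabs : ∑ i, |a i| ^ 2 = ∑ i, a i ^ 2 :=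
    Finset.sum_congr rfl fun i _ => by rw [sq_abs]
  rw [hsabs] at hgrowth
  set s := ∑ i, a i ^ 2 with hs
  set Dd := ∑ i, |d i| with hDd
  have hsnn : 0 ≤ s := Finset.sum_nonneg fun i _ => sq_nonneg _
  have hDnn : 0 ≤ Dd := Finset.sum_nonneg fun i _ => abs_nonneg _
  have hm1 : (1:ℝ) ≤ (m:ℝ) := by exact_mod_cast hm
  have h2m : (0:ℝ) < 2 * (m:ℝ) - 1 := by linarith
  set t := ν (Fin.last m) - a0 with ht
  set δ : Fin m → ℝ := fun j => μ j - ν (Fin.castSucc j) with hδ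
  have hδ0 : ∀ j, 0 ≤ δ j := fun j => sub_nonneg.mpr (interlace j)
  have ht0 : 0 ≤ t := sub_nonneg.mpr htop
  have hνsplit := Fin.sum_univ_castSucc (f := ν)
  have hνsqsplit := Fin.sum_univ_castSucc (f := fun j => ν j ^ 2)
  have hsum_δ : ∑ j, δ j = t := by
    have h1 : ∑ j : Fin m, δ j = ∑ j : Fin m, μ j - ∑ j : Fin m, ν (Fin.castSucc j) :=
      Finset.sum_sub_distrib _ _
    have h2 : ∑ j : Fin m, ν (Fin.castSucc j) = (∑ i, d i) + a0 - ν (Fin.last m) := by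
      rw [← htr1, hνsplit]; ring
    rw [h1, hμsum, h2, ht]; ring
  have hμD : ∀ j, μ j ≤ Dd := by
    intro j
    rw [hμ j]
    exact (le_abs_self _).trans (Finset.single_le_sum (f := fun i => |d i|)
      (fun i _ => abs_nonneg _) (Finset.mem_univ (π j)))
  have hkey : 2 * a0 * t + t ^ 2 ≤ 2 * s + 2 * Dd * t := by
    have hνlast : ν (Fin.last m) = a0 + t := by rw [ht]; ring
    have e1 : ∑ j : Fin m, ν (Fin.castSucc j) ^ 2
        = (∑ i, d i ^ 2) + a0 ^ 2 + 2 * s - ν (Fin.last m) ^ 2 := by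
      have h5 := htr2
      rw [hνsqsplit] at h5
      linarith
    have e2 : ∑ j : Fin m, (μ j ^ 2 - ν (Fin.castSucc j) ^ 2)
        ≤ ∑ j : Fin m, 2 * Dd * δ j := by
      refine Finset.sum_le_sum fun j _ => ?_
      have h6 : ν (Fin.castSucc j) = μ j - δ j := by rw [hδ]; ring
      have h7 := hμD j
      have h8 := hδ0 j
      rw [h6]
      nlinarith
    have e3 : ∑ j : Fin m, (μ j ^ 2 - ν (Fin.castSucc j) ^ 2)
        = 2 * a0 * t + t ^ 2 - 2 * s := by
      rw [Finset.sum_sub_distrib, hμsqsum, e1, hνlast]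
      ring
    have e4 : ∑ j : Fin m, 2 * Dd * δ j = 2 * Dd * t := by
      rw [← Finset.mul_sum, hsum_δ]
    rw [e3, e4] at e2
    linarith
  have htlt : t < ε / (2 * (m:ℝ) - 1) := by
    by_contra hcon
    push_neg at hcon
    set β := ε / (2 * (m:ℝ) - 1) with hβ
    have hβpos : 0 < β := div_pos hε h2m
    have hcs : (2 * (m:ℝ) - 1) / ε * s ≤ a0 - Dd := by
      have h9 : 0 ≤ ((m:ℝ) - 1) * Dd := mul_nonneg (by linarith) hDnn
      have h10 : 0 ≤ ((m:ℝ) - 1) * ε / (2 * (m:ℝ) - 1) :=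
        div_nonneg (mul_nonneg (by linarith) hε.le) h2m.le
      nlinarith [hgrowth]
    have hcsnn : 0 ≤ (2 * (m:ℝ) - 1) / ε * s :=
      mul_nonneg (div_nonneg h2m.le hε.le) hsnn
    have hcβ : (2 * (m:ℝ) - 1) / ε * β = 1 := by
      rw [hβ]
      field_simp
    have hA2 : 2 * ((2 * (m:ℝ) - 1) / ε * s) * t ≤ 2 * (a0 - Dd) * t :=
      mul_le_mul_of_nonneg_right (by linarith) ht0
    have hA3 : 2 * ((2 * (m:ℝ) - 1) / ε * s) * β ≤ 2 * ((2 * (m:ℝ) - 1) / ε * s) * t :=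
      mul_le_mul_of_nonneg_left hcon (by linarith)
    have hA4 : β ^ 2 ≤ t ^ 2 := by nlinarith
    have hA5 : 2 * ((2 * (m:ℝ) - 1) / ε * s) * β = 2 * s := by
      have : (2 * (m:ℝ) - 1) / ε * s * β = s := by
        rw [mul_right_comm, hcβ, one_mul]
      linarith [this]
    nlinarith [hkey]
  have hβε : ε / (2 * (m:ℝ) - 1) ≤ ε := by
    rw [div_le_iff₀ h2m]
    nlinarith
  have hδle : ∀ j, δ j ≤ t := fun j =>
    hsum_δ ▸ Finset.single_le_sum (fun i _ => hδ0 i) (Finset.mem_univ j)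
  refine ⟨(Equiv.optionCongr π.symm).trans (finSuccEquivLast.symm.trans ρ), ?_, ?_, ?_⟩
  · intro i
    have hσs : ((Equiv.optionCongr π.symm).trans (finSuccEquivLast.symm.trans ρ)) (some i)
        = ρ (Fin.castSucc (π.symm i)) := by
      simp [Equiv.trans_apply, -Equiv.optionCongr_symm, finSuccEquivLast_symm_some]
    rw [hσs, ← hν]
    have hdi : d i = μ (π.symm i) := by rw [hμ, Equiv.apply_symm_apply]
    rw [hdi]
    have h11 : μ (π.symm i) - ν (Fin.castSucc (π.symm i)) = δ (π.symm i) := by rw [hδ]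
    rw [h11, abs_of_nonneg (hδ0 _)]
    have := hδle (π.symm i)
    linarith
  · have hσn : ((Equiv.optionCongr π.symm).trans (finSuccEquivLast.symm.trans ρ)) none
        = ρ (Fin.last m) := by
      simp [Equiv.trans_apply, -Equiv.optionCongr_symm, finSuccEquivLast_symm_some]
    rw [hσn, ← hν]
    linarith
  · have hσn : ((Equiv.optionCongr π.symm).trans (finSuccEquivLast.symm.trans ρ)) none
        = ρ (Fin.last m) := by
      simp [Equiv.trans_apply, -Equiv.optionCongr_symm, finSuccEquivLast_symm_some]
    rw [hσn, ← hν]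
    have h12 : ε ≤ (m:ℝ) * ε := le_mul_of_one_le_left hε.le hm1
    linarith
end

section
/- Let f be smooth, monotone (fᵢ > 0) and concave on an open symmetric convex cone Γ, with f continuous up to the closure. If μ ∈ Γ, then for every ε > 0 sufficiently small and every R large enough, the vector (μ₁ − ε, …, μ_{n−1} − ε, R) belongs to Γ and f(μ₁ − ε, …, μ_{n−1} − ε, R) ≥ f(μ), provided lim_{t→∞} f(tλ) > f(ν) for all λ, ν ∈ Γ and (μ₁−ε,…,μ_{n−1}−ε) ∈ Γ_∞. -/
open Filter Topology

/-!
Raising the last coordinate keeps a point in `Γ` (an open convex cone containing the positive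
orthant absorbs the closed orthant) and strictly increases `f`, since `fₙ > 0`. Hence
`f (μ + eₙ) > f μ`; by continuity this strict inequality survives lowering the first `n`
coordinates by a small `ε`, and raising the last coordinate further only increases `f`.
-/

lemma add_mem_of_convex_of_smul_mem {E : Type*} [AddCommGroup E] [Module ℝ E] {Γ : Set E}
    (hconv : Convex ℝ Γ) (hcone : ∀ x ∈ Γ, ∀ t : ℝ, 0 < t → t • x ∈ Γ)
    {a b : E} (ha : a ∈ Γ) (hb : b ∈ Γ) : a + b ∈ Γ := by
  have hmid := hconv ha hb (by norm_num : (0 : ℝ) ≤ 1 / 2) (by norm_num : (0 : ℝ) ≤ 1 / 2)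
    (by norm_num)
  convert hcone _ hmid 2 two_pos using 1
  module

/-- Shift `x` slightly down inside `Γ`, then add the positive vector `v + δ • 1`. -/
lemma add_mem_of_nonneg {ι : Type*} {Γ : Set (ι → ℝ)} (hopen : IsOpen Γ) (hconv : Convex ℝ Γ)
    (hcone : ∀ x ∈ Γ, ∀ t : ℝ, 0 < t → t • x ∈ Γ)
    (hpos : {x : ι → ℝ | ∀ i, 0 < x i} ⊆ Γ)
    {x v : ι → ℝ} (hx : x ∈ Γ) (hv : 0 ≤ v) : x + v ∈ Γ := by
  have hshift : Tendsto (fun δ : ℝ => x - δ • (1 : ι → ℝ)) (𝓝[>] 0) (𝓝 x) :=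
    ((continuous_const.sub (continuous_id.smul continuous_const)).tendsto' 0 x
      (by simp)).mono_left nhdsWithin_le_nhds
  obtain ⟨δ, hδx, hδ⟩ :=
    ((hshift.eventually (hopen.mem_nhds hx)).and self_mem_nhdsWithin).exists
  have hpos' : v + δ • (1 : ι → ℝ) ∈ Γ := hpos fun i => by
    simpa using add_pos_of_nonneg_of_pos (hv i) (Set.mem_Ioi.1 hδ)
  convert add_mem_of_convex_of_smul_mem hconv hcone hδx hpos' using 1
  abel

lemma strictMonoOn_apply_add_smul {E : Type*} [NormedAddCommGroup E] [NormedSpace ℝ E]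
    {Γ : Set E} {f : E → ℝ} {x v : E} (hray : ∀ t : ℝ, 0 ≤ t → x + t • v ∈ Γ)
    (hdiff : ∀ y ∈ Γ, DifferentiableAt ℝ f y) (hderiv : ∀ y ∈ Γ, 0 < fderiv ℝ f y v) :
    StrictMonoOn (fun t : ℝ => f (x + t • v)) (Set.Ici 0) := by
  have hasDeriv : ∀ t : ℝ, 0 ≤ t →
      HasDerivAt (fun s : ℝ => f (x + s • v)) (fderiv ℝ f (x + t • v) v) t := fun t ht =>
    (hdiff _ (hray t ht)).hasFDerivAt.comp_hasDerivAt t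
      (((hasDerivAt_id t).smul_const v).const_add x |>.congr_deriv (one_smul ℝ v))
  refine strictMonoOn_of_deriv_pos (convex_Ici 0)
    (fun t ht => (hasDeriv t ht).continuousAt.continuousWithinAt) fun t ht => ?_
  rw [interior_Ici] at ht
  rw [(hasDeriv t (le_of_lt ht)).deriv]
  exact hderiv _ (hray t (le_of_lt ht))

lemma Fin.snoc_eq_snoc_add_smul_single {R : Type*} [Ring R] {n : ℕ} (x : Fin n → R) (a b : R) :
    (Fin.snoc x b : Fin (n + 1) → R) = Fin.snoc x a + (b - a) • Pi.single (Fin.last n) 1 := by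
  ext i
  induction i using Fin.lastCases with
  | last => simp
  | cast j => simp [(Fin.castSucc_lt_last j).ne]

theorem stmt19_general {n : ℕ} (Γ : Set (Fin (n + 1) → ℝ)) (f : (Fin (n + 1) → ℝ) → ℝ)
    (hopen : IsOpen Γ) (hconv : Convex ℝ Γ)
    (hcone : ∀ x ∈ Γ, ∀ t : ℝ, 0 < t → t • x ∈ Γ)
    (hpos : {x : Fin (n + 1) → ℝ | ∀ i, 0 < x i} ⊆ Γ)
    (hdiff : ∀ x ∈ Γ, DifferentiableAt ℝ f x)
    (hmono : ∀ x ∈ Γ, ∀ i, 0 < fderiv ℝ f x (Pi.single i 1))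
    (mu : Fin (n + 1) → ℝ) (hmu : mu ∈ Γ) :
    ∃ ε₀ : ℝ, 0 < ε₀ ∧ ∀ ε : ℝ, 0 < ε → ε ≤ ε₀ →
      ((fun i : Fin n => mu i.castSucc - ε) ∈
          {x : Fin n → ℝ | ∃ t : ℝ, Fin.snoc x t ∈ Γ}) →
        ∃ R₀ : ℝ, ∀ R ≥ R₀,
          (Fin.snoc (fun i : Fin n => mu i.castSucc - ε) R : Fin (n + 1) → ℝ) ∈ Γ ∧
          f mu ≤ f (Fin.snoc (fun i : Fin n => mu i.castSucc - ε) R) := by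
  set e : Fin (n + 1) → ℝ := Pi.single (Fin.last n) 1
  have ray : ∀ x ∈ Γ, ∀ t : ℝ, 0 ≤ t → x + t • e ∈ Γ := fun x hx t ht =>
    add_mem_of_nonneg hopen hconv hcone hpos hx (smul_nonneg ht (Pi.single_nonneg.2 zero_le_one))
  have mono : ∀ x ∈ Γ, StrictMonoOn (fun t : ℝ => f (x + t • e)) (Set.Ici 0) := fun x hx =>
    strictMonoOn_apply_add_smul (ray x hx) hdiff fun y hy => hmono y hy _
  set R₀ := mu (Fin.last n) + 1
  set p : ℝ → Fin (n + 1) → ℝ := fun ε => Fin.snoc (fun i : Fin n => mu i.castSucc - ε) R₀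
  have hp0 : p 0 = mu + (1 : ℝ) • e := by
    rw [show p 0 = Fin.snoc (Fin.init mu) R₀ by simp [p]; rfl,
      Fin.snoc_eq_snoc_add_smul_single _ (mu (Fin.last n)), Fin.snoc_init_self,
      add_sub_cancel_left]
  have hp0_mem : p 0 ∈ Γ ∩ f ⁻¹' Set.Ioi (f mu) := by
    rw [hp0]
    refine ⟨ray mu hmu 1 zero_le_one, ?_⟩
    simpa using mono mu hmu Set.self_mem_Ici (Set.mem_Ici.2 zero_le_one) one_pos
  have hU : IsOpen (Γ ∩ f ⁻¹' Set.Ioi (f mu)) :=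
    ContinuousOn.isOpen_inter_preimage (fun x hx => (hdiff x hx).continuousAt.continuousWithinAt)
      hopen isOpen_Ioi
  have hp : Continuous p := by fun_prop
  obtain ⟨δ, hδ, hδp⟩ :=
    Metric.eventually_nhds_iff.1 (hp.continuousAt.eventually_mem (hU.mem_nhds hp0_mem))
  refine ⟨δ / 2, half_pos hδ, fun ε hε hεδ _ => ⟨R₀, fun R hR => ?_⟩⟩
  obtain ⟨hpΓ, hpf⟩ : p ε ∈ Γ ∩ f ⁻¹' Set.Ioi (f mu) :=
    hδp (by rw [Real.dist_eq, sub_zero, abs_of_pos hε]; linarith)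
  rw [Fin.snoc_eq_snoc_add_smul_single _ R₀ R]
  refine ⟨ray _ hpΓ _ (sub_nonneg.2 hR), le_trans (le_of_lt hpf) ?_⟩
  simpa using (mono _ hpΓ).monotoneOn Set.self_mem_Ici (Set.mem_Ici.2 (sub_nonneg.2 hR))
    (sub_nonneg.2 hR)

/-- Step 1 of the pure normal derivative estimate: for `f` smooth, monotone, concave on the
open symmetric convex cone `Γ ⊂ ℝ^{n+1}`, continuous up to the closure, satisfying
`lim_{t→∞} f(tλ) > f(ν)` for all `λ, ν ∈ Γ`, and `μ ∈ Γ`: for all sufficiently small `ε > 0`,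
provided `(μ₁−ε,…,μ_n−ε) ∈ Γ_∞`, there is `R₀` such that for every `R ≥ R₀` the vector
`(μ₁−ε,…,μ_n−ε,R)` lies in `Γ` and `f(μ₁−ε,…,μ_n−ε,R) ≥ f(μ)`. -/
theorem stmt19 {n : ℕ} (Γ : Set (Fin (n + 1) → ℝ)) (f : (Fin (n + 1) → ℝ) → ℝ)
    (hopen : IsOpen Γ) (hconv : Convex ℝ Γ)
    (hcone : ∀ x ∈ Γ, ∀ t : ℝ, 0 < t → t • x ∈ Γ)
    (hsymm : ∀ x ∈ Γ, ∀ σ : Equiv.Perm (Fin (n + 1)), x ∘ σ ∈ Γ)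
    (hpos : {x : Fin (n + 1) → ℝ | ∀ i, 0 < x i} ⊆ Γ)
    (hcont : ContinuousOn f (closure Γ))
    (hdiff : ∀ x ∈ Γ, DifferentiableAt ℝ f x)
    (hmono : ∀ x ∈ Γ, ∀ i, 0 < fderiv ℝ f x (Pi.single i 1))
    (hconc : ConcaveOn ℝ Γ f)
    (hlim : ∀ lam ∈ Γ, ∀ nu ∈ Γ,
        (f nu : EReal) < Filter.limsup (fun t : ℝ => (f (t • lam) : EReal)) atTop)
    (mu : Fin (n + 1) → ℝ) (hmu : mu ∈ Γ) :
    ∃ ε₀ : ℝ, 0 < ε₀ ∧ ∀ ε : ℝ, 0 < ε → ε ≤ ε₀ →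
      ((fun i : Fin n => mu i.castSucc - ε) ∈
          {x : Fin n → ℝ | ∃ t : ℝ, Fin.snoc x t ∈ Γ}) →
        ∃ R₀ : ℝ, ∀ R ≥ R₀,
          (Fin.snoc (fun i : Fin n => mu i.castSucc - ε) R : Fin (n + 1) → ℝ) ∈ Γ ∧
          f mu ≤ f (Fin.snoc (fun i : Fin n => mu i.castSucc - ε) R) :=
  stmt19_general Γ f hopen hconv hcone hpos hdiff hmono mu hmu
end
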